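/- Let O ⊆ P contain A. For every order ideal J ∈ 𝒥ₖ and every i ∈ [1,k], one has |w^{O,J}(i)| ≥ i. Consequently the tuple (w^{O,J}(1), …, w^{O,J}(k)) is admissible, i.e. its elements are pairwise distinct and for every l ∈ [1,n] the number of entries i_j with |i_j| ≤ l is at most l. -/

import Mathlib

open scoped Classical Pointwise

noncomputable section

/-- Position of `j` in the total order `1 ⋖ … ⋖ n ⋖ -n ⋖ … ⋖ -1` on `N`. -/
def ordKey (n : ℕ) (j : ℤ) : ℤ := if 0 < j then j else 2 * n + 1 + j

/-- Membership in the type C Gelfand–Tsetlin poset `P`: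
pairs `(i,j)` with `1 ≤ i ≤ n` and `i ≤ |j| ≤ n`. -/
def inP (n : ℕ) (p : ℤ × ℤ) : Prop :=
  1 ≤ p.1 ∧ p.1 ≤ (n : ℤ) ∧ p.1 ≤ |p.2| ∧ |p.2| ≤ (n : ℤ)

/-- The order relation `⪯` of `P`: `(i₁,j₁) ⪯ (i₂,j₂)` iff `i₁ ≤ i₂` and `j₁ ⩽̇ j₂`. -/
def ple (n : ℕ) (p q : ℤ × ℤ) : Prop :=
  p.1 ≤ q.1 ∧ ordKey n p.2 ≤ ordKey n q.2

/-- Strict version of `⪯`. -/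
def plt (n : ℕ) (p q : ℤ × ℤ) : Prop := ple n p q ∧ p ≠ q

/-- The elements of `N = {1,…,n,-n,…,-1}` listed in increasing `⋖` order. -/
def jList (n : ℕ) : List ℤ :=
  ((List.range n).map fun t => (t : ℤ) + 1) ++ ((List.range n).map fun t => (t : ℤ) - n)

/-- All pairs `(i,j)` with `i ∈ [1,n]`, `j ∈ N`, ordered first by `i` increasing,
then by `j` increasing with respect to `⋖`. -/
def posList (n : ℕ) : List (ℤ × ℤ) :=
  (List.range n).flatMap fun a => (jList n).map fun j => ((a : ℤ) + 1, j)

/-- `P` as a finite set. -/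
def Pfin (n : ℕ) : Finset (ℤ × ℤ) := (posList n).toFinset.filter (inP n)

/-- `N` as a finite set. -/
def Nfin (n : ℕ) : Finset ℤ := (jList n).toFinset

/-- The diagonal `A = {(i,i) : 1 ≤ i ≤ n}`. -/
def Aset (n : ℕ) : Finset (ℤ × ℤ) :=
  (Finset.range n).image fun t => (((t : ℤ) + 1, (t : ℤ) + 1) : ℤ × ℤ)

/-- Order ideals (downward closed subsets) of `P`. -/
def IsIdeal (n : ℕ) (J : Finset (ℤ × ℤ)) : Prop :=
  (∀ p ∈ J, inP n p) ∧ ∀ p ∈ J, ∀ q ∈ Pfin n, ple n q p → q ∈ J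

/-- The set of `≺`-maximal elements of `J`. -/
def maxPrec (n : ℕ) (J : Finset (ℤ × ℤ)) : Finset (ℤ × ℤ) :=
  J.filter fun p => ∀ q ∈ J, ple n p q → q = p

/-- `M_O(J) = (J ∩ O) ∪ max_≺(J)`. -/
def MO (n : ℕ) (O J : Finset (ℤ × ℤ)) : Finset (ℤ × ℤ) := (J ∩ O) ∪ maxPrec n J

/-- The permutation `w_M`: the product of the transpositions `s_{i,j}` over `(i,j) ∈ M`,
ordered first by `i` increasing and then by `j` increasing with respect to `⋖`
(the leftmost factor acts last). -/
def wPerm (n : ℕ) (M : Finset (ℤ × ℤ)) : Equiv.Perm ℤ :=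
  (((posList n).filter fun p => decide (p ∈ M)).map fun p => Equiv.swap p.1 p.2).prod

/-- `w^{O,J} = w_O⁻¹ ⬝ w_{M_O(J)}`. -/
def wOJ (n : ℕ) (O J : Finset (ℤ × ℤ)) : Equiv.Perm ℤ :=
  (wPerm n O)⁻¹ * wPerm n (MO n O J)

/-- The principal order ideal `⟨i,j⟩` of `(i,j) ∈ P`. -/
def princ (n : ℕ) (p : ℤ × ℤ) : Finset (ℤ × ℤ) := (Pfin n).filter fun q => ple n q p

/-- `r(i,j) = w^{O,⟨i,j⟩}(i)`. -/
def rMap (n : ℕ) (O : Finset (ℤ × ℤ)) (i j : ℤ) : ℤ := wOJ n O (princ n (i, j)) i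

/-- Inverse of `ordKey` (on the relevant range `[1, 2n]`). -/
def invOrdKey (n : ℕ) (t : ℤ) : ℤ := if t ≤ (n : ℤ) then t else t - (2 * n + 1)

/-- The `⋖`-maximal `j'` with `j' ⋖ j` and `(i,j') ∈ O`. -/
def prevO (n : ℕ) (O : Finset (ℤ × ℤ)) (i j : ℤ) : ℤ :=
  invOrdKey n (WithBot.unbotD 0 ((((Nfin n).filter fun j' => (i, j') ∈ O ∧ ordKey n j' < ordKey n j).image
    (ordKey n)).max))

/-- The pipe-dream linear transform `ξ` of `ℝ^P` (coordinates outside `P` are untouched):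
`ξ(ε_{i,i}) = ε_{i,r(i,i)}` and `ξ(ε_{i,j}) = ε_{i,r(i,j)} - ε_{i,r(i,j')}` for `j ≠ i`,
where `j'` is `⋖`-maximal with `j' ⋖ j` and `(i,j') ∈ O`. -/
def xiMap (n : ℕ) (O : Finset (ℤ × ℤ)) (x : (ℤ × ℤ) → ℝ) : (ℤ × ℤ) → ℝ := fun q =>
  if inP n q then
    (∑ j ∈ (Nfin n).filter (fun j => inP n (q.1, j) ∧ rMap n O q.1 j = q.2), x (q.1, j))
    - (∑ j ∈ (Nfin n).filter
        (fun j => inP n (q.1, j) ∧ j ≠ q.1 ∧ rMap n O q.1 (prevO n O q.1 j) = q.2), x (q.1, j))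
  else x q

/-- Indicator vector `1_{M_O(J)} ∈ ℝ^P`. -/
def indicMO (n : ℕ) (O J : Finset (ℤ × ℤ)) : (ℤ × ℤ) → ℝ := fun p =>
  if p ∈ MO n O J then 1 else 0

/-- The fundamental marked chain-order polytope `𝒬_O(ω_k)`:
the convex hull of the vectors `1_{M_O(J)}`, `J ∈ 𝒥ₖ`. -/
def QOfund (n : ℕ) (O : Finset (ℤ × ℤ)) (k : ℕ) : Set ((ℤ × ℤ) → ℝ) :=
  convexHull ℝ {x | ∃ J : Finset (ℤ × ℤ),
    IsIdeal n J ∧ (J ∩ Aset n).card = k ∧ x = indicMO n O J}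

/-- The marked chain-order polytope `𝒬_O(λ)` for `λ = a₁ω₁ + … + a_nω_n`:
the Minkowski sum `a₁𝒬_O(ω₁) + … + a_n𝒬_O(ω_n)`. -/
def QO (n : ℕ) (O : Finset (ℤ × ℤ)) (a : ℕ → ℕ) : Set ((ℤ × ℤ) → ℝ) :=
  ∑ k ∈ Finset.Icc 1 n, a k • QOfund n O k

/-- Integrality (lattice point) predicate. -/
def IsLat (x : (ℤ × ℤ) → ℝ) : Prop := ∀ p, ∃ m : ℤ, x p = m

/-- Type B: `λ(i) = a_i + … + a_{n-1} + a_n/2`. -/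
def lamB (n : ℕ) (a : ℕ → ℕ) (i : ℤ) : ℝ :=
  (∑ t ∈ Finset.Icc i.toNat (n - 1), (a t : ℝ)) + (a n : ℝ) / 2

/-- The type B poset polytope `𝒬^B_O(λ)` (H-description with factor `1/2`
on the coordinates in `B = {(i,-i)}`). -/
def QB (n : ℕ) (O : Finset (ℤ × ℤ)) (lam : ℤ → ℝ) : Set ((ℤ × ℤ) → ℝ) :=
  {x | (∀ i : ℤ, 1 ≤ i → i ≤ (n : ℤ) → x (i, i) = lam i) ∧
    (∀ p, inP n p → 0 ≤ x p) ∧ (∀ p, ¬ inP n p → x p = 0) ∧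
    ∀ (pq rs : ℤ × ℤ) (c : List (ℤ × ℤ)), pq ∈ O → inP n rs →
      (∀ q ∈ c, inP n q ∧ q ∉ O) →
      List.Chain' (plt n) (pq :: (c ++ [rs])) →
      (c.map x).sum ≤ x pq - (if rs.2 = -rs.1 then (1 : ℝ) / 2 else 1) * x rs}

/-- The point `x^{J,D}`. -/
def xJD (n : ℕ) (O J : Finset (ℤ × ℤ)) (D : Finset ℤ) : (ℤ × ℤ) → ℝ := fun p =>
  if p ∈ MO n O J then (if p.2 = -p.1 ∧ p.1 ∉ D then 2 else 1) else 0

/-- The projection `π : ℝ^P → ℝ^{P∖A}` (realized by zeroing the `A`-coordinates). -/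
def piA (x : (ℤ × ℤ) → ℝ) : (ℤ × ℤ) → ℝ := fun p => if p.2 = p.1 then 0 else x p

/-- The transformed type B poset polytope `Π^B_O(λ) = πξ(𝒬^B_O(λ))`. -/
def PiB (n : ℕ) (O : Finset (ℤ × ℤ)) (a : ℕ → ℕ) : Set ((ℤ × ℤ) → ℝ) :=
  (fun x => piA (xiMap n O x)) '' QB n O (lamB n a)

/-- The point `y^D ∈ ℝ^{P∖A}`. -/
def yD (D : Finset ℤ) : (ℤ × ℤ) → ℝ := fun p => if p.2 = -p.1 ∧ p.1 ∈ D then 1 else 0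

/-!
Write `w_M` as the product of its rows `1, …, n` (row `n` acting first). Row `t` only moves
entries of absolute value `≥ t`, so `i` is fixed by the rows `> i`, and row `i` sends it to some
`y` with `(i, y) ∈ J`, because `(i, i) ∈ J` for `i ≤ k`. Through the rows `t = i - 1, …, 1` the
current entry `x` satisfies `(t + 1, x) ∈ J`; in row `t`, `M_O(J)` and `O` agree on every entry
`⩽̇ x`, and a row evaluated at `x` only sees those entries, so these rows of `w_{M_O(J)}` and of
`w_O` act alike. Hence `w^{O,J}(i)` is the preimage of `y` under the rows
`≥ i` of `w_O`, which fix every entry of absolute value `< i`, while `|y| ≥ i`.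
-/
open Equiv

section SwapProducts

variable {α : Type*} [DecidableEq α]

lemma swap_prod_apply_of_ne_of_notMem {t x : α} {L : List α} (hxt : x ≠ t) (hxL : x ∉ L) :
    (L.map (swap t)).prod x = x := by
  induction L with
  | nil => rfl
  | cons a L ih =>
    rw [List.mem_cons, not_or] at hxL
    rw [List.map_cons, List.prod_cons, Perm.mul_apply, ih hxL.2, swap_apply_of_ne_of_ne hxt hxL.1]

lemma swap_prod_apply_mem (t x : α) (L : List α) : (L.map (swap t)).prod x ∈ x :: t :: L := by
  induction L with
  | nil => simp
  | cons a L ih =>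
    rw [List.map_cons, List.prod_cons, Perm.mul_apply, swap_apply_def]
    split_ifs <;> simp_all

lemma swap_prod_filter_apply_congr {β : Type*} [Preorder β] (key : α → β) {L : List α}
    (hL : L.Pairwise (key · < key ·)) {p q : α → Bool} {t x : α} (hx : x ∈ L)
    (ht : key t < key x) (hpq : ∀ j ∈ L, key j ≤ key x → p j = q j) :
    ((L.filter p).map (swap t)).prod x = ((L.filter q).map (swap t)).prod x := by
  obtain ⟨L₁, L₂, rfl⟩ := List.append_of_mem hx
  obtain ⟨-, hL₂, hL₁₂⟩ := List.pairwise_append.mp hL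
  have hxL₂ : ∀ j ∈ L₂, key x < key j := (List.pairwise_cons.mp hL₂).1
  have hfix (r : α → Bool) : ((L₂.filter r).map (swap t)).prod x = x :=
    swap_prod_apply_of_ne_of_notMem (fun h => ht.ne' (congrArg key h))
      (fun h => lt_irrefl _ (hxL₂ x (List.mem_of_mem_filter h)))
  have hcongr : (L₁ ++ [x]).filter p = (L₁ ++ [x]).filter q := by
    refine List.filter_congr fun j hj =>
      hpq j (by rw [List.append_cons]; exact List.mem_append_left _ hj) ?_
    rcases List.mem_append.mp hj with hj | hj
    · exact (hL₁₂ j hj x List.mem_cons_self).le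
    · rw [List.mem_singleton.mp hj]
  have hdrop (r : α → Bool) : (((L₁ ++ [x] ++ L₂).filter r).map (swap t)).prod x =
      (((L₁ ++ [x]).filter r).map (swap t)).prod x := by
    rw [List.filter_append, List.map_append, List.prod_append, Perm.mul_apply, hfix]
  rw [List.append_cons, hdrop, hdrop, hcongr]

end SwapProducts

lemma ordKey_of_pos {n : ℕ} {j : ℤ} (h : 0 < j) : ordKey n j = j := if_pos h

lemma ordKey_of_nonpos {n : ℕ} {j : ℤ} (h : j ≤ 0) : ordKey n j = 2 * n + 1 + j := if_neg h.not_gt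

lemma ordKey_lt_ordKey_of_lt_abs {n : ℕ} {t x : ℤ} (ht : 0 < t) (htx : t < |x|) (hx : |x| ≤ n) :
    ordKey n t < ordKey n x := by
  rw [ordKey_of_pos ht]
  rcases lt_or_ge 0 x with h | h
  · rw [ordKey_of_pos h]; rw [abs_of_pos h] at htx; exact htx
  · rw [ordKey_of_nonpos h]; rw [abs_of_nonpos h] at htx hx; omega

-- `jList` and `posList` elaborate `List.range n` into `List ℤ` through the monad-lift coercion.
lemma list_bind_pure_natCast (l : List ℕ) :
    ((do let a ← l; pure (a : ℤ)) : List ℤ) = l.map Nat.cast :=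
  List.flatMap_pure_eq_map _ _

lemma jList_eq (n : ℕ) : jList n =
    (List.range n).map (fun t : ℕ => (t : ℤ) + 1) ++
      (List.range n).map (fun t : ℕ => (t : ℤ) - n) := by
  rw [jList, list_bind_pure_natCast, List.map_map, List.map_map]; rfl

lemma mem_jList {n : ℕ} {j : ℤ} : j ∈ jList n ↔ 1 ≤ |j| ∧ |j| ≤ n := by
  rw [jList_eq]
  simp only [List.mem_append, List.mem_map, List.mem_range]
  constructor
  · rintro (⟨t, ht, rfl⟩ | ⟨t, ht, rfl⟩)
    · rw [abs_of_pos (by positivity)]; omega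
    · rw [abs_of_neg (by omega)]; omega
  · rintro ⟨h1, h2⟩
    rcases lt_or_ge 0 j with hj | hj
    · rw [abs_of_pos hj] at h1 h2
      exact Or.inl ⟨(j - 1).toNat, by omega, by omega⟩
    · rw [abs_of_nonpos hj] at h1 h2
      exact Or.inr ⟨(j + n).toNat, by omega, by omega⟩

lemma jList_pairwise (n : ℕ) : (jList n).Pairwise (ordKey n · < ordKey n ·) := by
  rw [jList_eq, List.pairwise_append, List.pairwise_map, List.pairwise_map]
  refine ⟨List.pairwise_lt_range.imp fun {a b} hab => ?_,
    List.pairwise_lt_range.imp_of_mem fun {a b} ha hb hab => ?_, ?_⟩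
  · rw [ordKey_of_pos (by positivity), ordKey_of_pos (by positivity)]; omega
  · rw [List.mem_range] at ha hb
    rw [ordKey_of_nonpos (by omega), ordKey_of_nonpos (by omega)]; omega
  · simp only [List.mem_map, List.mem_range]
    rintro _ ⟨a, ha, rfl⟩ _ ⟨b, hb, rfl⟩
    rw [ordKey_of_pos (by positivity), ordKey_of_nonpos (by omega)]; omega

lemma inP_mk {n : ℕ} {a b : ℤ} : inP n (a, b) ↔ 1 ≤ a ∧ a ≤ n ∧ a ≤ |b| ∧ |b| ≤ n := Iff.rfl

lemma mem_Pfin {n : ℕ} {p : ℤ × ℤ} : p ∈ Pfin n ↔ inP n p := by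
  refine ⟨fun h => (Finset.mem_filter.mp h).2, fun h => Finset.mem_filter.mpr ⟨?_, h⟩⟩
  obtain ⟨h1, h2, h3, h4⟩ := h
  rw [List.mem_toFinset, posList, list_bind_pure_natCast, List.flatMap_map]
  refine List.mem_flatMap.mpr ⟨(p.1 - 1).toNat, List.mem_range.mpr (by omega), ?_⟩
  exact List.mem_map.mpr ⟨p.2, mem_jList.mpr ⟨by omega, h4⟩, Prod.ext (by omega) rfl⟩

lemma eq_of_mem_Aset {n : ℕ} {p : ℤ × ℤ} (hp : p ∈ Aset n) :
    ∃ c : ℤ, 1 ≤ c ∧ c ≤ n ∧ p = (c, c) := by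
  simp only [Aset, Finset.mem_image, Finset.pure_def, Finset.bind_def,
    Finset.sup_singleton_apply, Finset.mem_range] at hp
  obtain ⟨_, ⟨a, ha, rfl⟩, rfl⟩ := hp
  exact ⟨a + 1, by omega, by omega, rfl⟩

def rowPerm (n : ℕ) (S : Finset (ℤ × ℤ)) (t : ℤ) : Perm ℤ :=
  (((jList n).filter fun j => (t, j) ∈ S).map (swap t)).prod

def rowsPerm (n : ℕ) (S : Finset (ℤ × ℤ)) (l : List ℕ) : Perm ℤ :=
  (l.map fun u : ℕ => rowPerm n S u).prod

lemma rowsPerm_cons (n : ℕ) (S : Finset (ℤ × ℤ)) (u : ℕ) (l : List ℕ) :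
    rowsPerm n S (u :: l) = rowPerm n S u * rowsPerm n S l := by
  rw [rowsPerm, List.map_cons, List.prod_cons, rowsPerm]

lemma wPerm_eq_rowsPerm (n : ℕ) (S : Finset (ℤ × ℤ)) :
    wPerm n S = rowsPerm n S (List.range' 1 n) := by
  rw [wPerm, posList, list_bind_pure_natCast, List.flatMap_map, List.filter_flatMap,
    List.map_flatMap, List.flatMap_def, List.prod_flatten, List.range'_eq_map_range, rowsPerm,
    List.map_map, List.map_map]
  refine congrArg List.prod (List.map_congr_left fun a _ => ?_)
  simp only [Function.comp_apply]
  rw [rowPerm, List.filter_map, List.map_map, Nat.cast_add, Nat.cast_one, add_comm]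
  rfl

lemma wPerm_eq_rowsPerm_mul (n : ℕ) (S : Finset (ℤ × ℤ)) {i : ℕ} (hi1 : 1 ≤ i) (hin : i ≤ n) :
    wPerm n S =
      rowsPerm n S (List.range' 1 (i - 1)) * rowsPerm n S (List.range' i (n + 1 - i)) := by
  rw [wPerm_eq_rowsPerm, rowsPerm, rowsPerm, rowsPerm, ← List.prod_append, ← List.map_append]
  congr 2
  have := List.range'_append (s := 1) (m := i - 1) (n := n + 1 - i) (step := 1)
  rw [show 1 + 1 * (i - 1) = i by omega, show i - 1 + (n + 1 - i) = n by omega] at this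
  exact this.symm

lemma rowPerm_apply_of_abs_lt {n : ℕ} {S : Finset (ℤ × ℤ)} (hS : S ⊆ Pfin n) {t x : ℤ}
    (hx : |x| < t) : rowPerm n S t x = x := by
  refine swap_prod_apply_of_ne_of_notMem (fun h => ?_) fun h => ?_
  · rw [h, abs_lt] at hx; omega
  · obtain ⟨-, -, hx', -⟩ := mem_Pfin.mp (hS (of_decide_eq_true (List.mem_filter.mp h).2))
    exact hx.not_ge hx'

lemma rowsPerm_apply_of_abs_lt {n : ℕ} {S : Finset (ℤ × ℤ)} (hS : S ⊆ Pfin n) {x : ℤ}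
    {l : List ℕ} (hl : ∀ u ∈ l, |x| < u) : rowsPerm n S l x = x := by
  induction l with
  | nil => rfl
  | cons u l ih =>
    rw [List.forall_mem_cons] at hl
    rw [rowsPerm_cons, Perm.mul_apply, ih hl.2, rowPerm_apply_of_abs_lt hS hl.1]

lemma rowPerm_apply_mem (n : ℕ) (S : Finset (ℤ × ℤ)) (t x : ℤ) :
    rowPerm n S t x = x ∨ rowPerm n S t x = t ∨ (t, rowPerm n S t x) ∈ S := by
  rcases List.mem_cons.mp (swap_prod_apply_mem t x ((jList n).filter fun j => (t, j) ∈ S))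
    with h | h
  · exact Or.inl h
  rcases List.mem_cons.mp h with h | h
  · exact Or.inr (Or.inl h)
  · exact Or.inr (Or.inr (of_decide_eq_true (List.mem_filter.mp h).2))

lemma MO_subset (n : ℕ) (O J : Finset (ℤ × ℤ)) : MO n O J ⊆ J :=
  Finset.union_subset Finset.inter_subset_left (Finset.filter_subset _ _)

namespace IsIdeal

variable {n : ℕ} {J : Finset (ℤ × ℤ)}

lemma diag_mem_of_le (hJ : IsIdeal n J) {c d : ℤ} (hc : (c, c) ∈ J) (hd : 1 ≤ d) (hdc : d ≤ c) :
    (d, d) ∈ J := by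
  obtain ⟨-, hcn, -, -⟩ := inP_mk.mp (hJ.1 _ hc)
  refine hJ.2 _ hc _ (mem_Pfin.mpr ⟨hd, by omega, le_abs_self d, by rw [abs_of_pos hd]; omega⟩)
    ⟨hdc, ?_⟩
  rw [ordKey_of_pos (by omega), ordKey_of_pos (by omega)]
  exact hdc

lemma diag_mem_of_le_card {k : ℕ} (hJ : IsIdeal n J) (hJk : (J ∩ Aset n).card = k) {c : ℤ}
    (hc : 1 ≤ c) (hck : c ≤ k) : (c, c) ∈ J := by
  by_contra hcJ
  have hsub : J ∩ Aset n ⊆ (Finset.Ico 1 c).image fun d => (d, d) := by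
    intro p hp
    obtain ⟨d, hd1, -, rfl⟩ := eq_of_mem_Aset (Finset.mem_inter.mp hp).2
    refine Finset.mem_image_of_mem _ (Finset.mem_Ico.mpr ⟨hd1, lt_of_not_ge fun hcd => ?_⟩)
    exact hcJ (hJ.diag_mem_of_le (Finset.mem_inter.mp hp).1 hc hcd)
  have := (Finset.card_le_card hsub).trans Finset.card_image_le
  rw [hJk, Int.card_Ico] at this
  omega

end IsIdeal

section MO

variable {n : ℕ} {O J : Finset (ℤ × ℤ)}

lemma mem_MO_iff_of_ordKey_le (hO : O ⊆ Pfin n) (hJ : IsIdeal n J) {s x y : ℤ}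
    (hx : (s + 1, x) ∈ J) (hy : ordKey n y ≤ ordKey n x) : (s, y) ∈ MO n O J ↔ (s, y) ∈ O := by
  have hlt : ple n (s, y) (s + 1, x) := ⟨by simp, hy⟩
  refine ⟨fun h => ?_, fun h =>
    Finset.mem_union_left _ (Finset.mem_inter.mpr ⟨hJ.2 _ hx _ (hO h) hlt, h⟩)⟩
  rcases Finset.mem_union.mp h with h | h
  · exact (Finset.mem_inter.mp h).2
  · have := (Finset.mem_filter.mp h).2 _ hx hlt
    simp at this

lemma rowPerm_MO_apply (hO : O ⊆ Pfin n) (hJ : IsIdeal n J) {s x : ℤ} (hs : 1 ≤ s)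
    (hx : (s + 1, x) ∈ J) : rowPerm n (MO n O J) s x = rowPerm n O s x := by
  obtain ⟨-, -, hsx, hxn⟩ := inP_mk.mp (hJ.1 _ hx)
  refine swap_prod_filter_apply_congr (ordKey n) (jList_pairwise n)
    (mem_jList.mpr ⟨by omega, hxn⟩) (ordKey_lt_ordKey_of_lt_abs (by omega) (by omega) hxn)
    fun j _ hj => ?_
  simp only [mem_MO_iff_of_ordKey_le hO hJ hx hj]

lemma rowPerm_MO_apply_mem (hJ : IsIdeal n J) {s x : ℤ} (hs : 1 ≤ s) (hss : (s, s) ∈ J)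
    (hx : (s + 1, x) ∈ J) : (s, rowPerm n (MO n O J) s x) ∈ J := by
  rcases rowPerm_apply_mem n (MO n O J) s x with h | h | h
  · obtain ⟨-, hsn, hsx, hxn⟩ := inP_mk.mp (hJ.1 _ hx)
    rw [h]
    exact hJ.2 _ hx _ (mem_Pfin.mpr (inP_mk.mpr ⟨hs, by omega, by omega, hxn⟩))
      ⟨by simp, le_rfl⟩
  · rwa [h]
  · exact MO_subset n O J h

lemma rowsPerm_MO_apply_eq_and_mem (hO : O ⊆ Pfin n) (hJ : IsIdeal n J) {i : ℕ}
    (hi : ((i : ℤ), (i : ℤ)) ∈ J) {y : ℤ} (hy : ((i : ℤ), y) ∈ J) :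
    ∀ m t : ℕ, 1 ≤ t → t + m = i →
      rowsPerm n (MO n O J) (List.range' t m) y = rowsPerm n O (List.range' t m) y ∧
      ((t : ℤ), rowsPerm n (MO n O J) (List.range' t m) y) ∈ J := by
  intro m
  induction m with
  | zero =>
    rintro t - rfl
    exact ⟨rfl, by simpa [rowsPerm] using hy⟩
  | succ m ih =>
    intro t ht htm
    obtain ⟨heq, hmem⟩ := ih (t + 1) (by omega) (by omega)
    push_cast at hmem
    have htt : ((t : ℤ), (t : ℤ)) ∈ J := hJ.diag_mem_of_le hi (by omega) (by omega)
    rw [List.range'_succ, rowsPerm_cons, rowsPerm_cons, Perm.mul_apply, Perm.mul_apply, ← heq]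
    exact ⟨rowPerm_MO_apply hO hJ (by omega) hmem, rowPerm_MO_apply_mem hJ (by omega) htt hmem⟩

lemma le_abs_wOJ_apply (hO : O ⊆ Pfin n) (hJ : IsIdeal n J) {i : ℕ} (hi1 : 1 ≤ i)
    (hi : ((i : ℤ), (i : ℤ)) ∈ J) : (i : ℤ) ≤ |wOJ n O J i| := by
  obtain ⟨-, hin, -, -⟩ := inP_mk.mp (hJ.1 _ hi)
  replace hin : i ≤ n := by exact_mod_cast hin
  have hM : MO n O J ⊆ Pfin n := (MO_subset n O J).trans fun p hp => mem_Pfin.mpr (hJ.1 p hp)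
  obtain ⟨y, hy⟩ : ∃ y, rowsPerm n (MO n O J) (List.range' i (n + 1 - i)) i = y := ⟨_, rfl⟩
  have hyJ : ((i : ℤ), y) ∈ J := by
    have hfix : rowsPerm n (MO n O J) (List.range' (i + 1) (n - i)) i = i :=
      rowsPerm_apply_of_abs_lt hM fun u hu => by
        rw [List.mem_range'_1] at hu; rw [Nat.abs_cast]; omega
    rw [show n + 1 - i = n - i + 1 by omega, List.range'_succ, rowsPerm_cons, Perm.mul_apply,
      hfix] at hy
    rcases rowPerm_apply_mem n (MO n O J) i i with h | h | h
    · rwa [← hy, h]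
    · rwa [← hy, h]
    · exact hy ▸ MO_subset n O J h
  obtain ⟨hagree, -⟩ := rowsPerm_MO_apply_eq_and_mem hO hJ hi hyJ (i - 1) 1 le_rfl (by omega)
  have hw : rowsPerm n O (List.range' i (n + 1 - i)) (wOJ n O J i) = y := by
    have h : wPerm n O (wOJ n O J i) = wPerm n (MO n O J) i := by
      rw [wOJ, Perm.mul_apply, Perm.coe_inv, apply_symm_apply]
    rw [wPerm_eq_rowsPerm_mul n O hi1 hin, wPerm_eq_rowsPerm_mul n (MO n O J) hi1 hin,
      Perm.mul_apply, Perm.mul_apply, hy, hagree] at h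
    exact (rowsPerm n O _).injective h
  by_contra! hlt
  rw [rowsPerm_apply_of_abs_lt hO fun u hu => by rw [List.mem_range'_1] at hu; omega] at hw
  obtain ⟨-, -, hiy, -⟩ := inP_mk.mp (hJ.1 _ hyJ)
  rw [← hw] at hiy
  omega

end MO

lemma card_filter_abs_le_of_le_abs {f : ℤ → ℤ} {k : ℤ} (hf : ∀ i, 1 ≤ i → i ≤ k → i ≤ |f i|)
    {l : ℤ} (hl : 0 ≤ l) : (((Finset.Icc 1 k).filter fun i => |f i| ≤ l).card : ℤ) ≤ l := by
  have hsub : (Finset.Icc (1 : ℤ) k).filter (fun i => |f i| ≤ l) ⊆ Finset.Icc 1 l := by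
    intro i hi
    obtain ⟨hik, hil⟩ := Finset.mem_filter.mp hi
    obtain ⟨hi1, hik⟩ := Finset.mem_Icc.mp hik
    exact Finset.mem_Icc.mpr ⟨hi1, (hf i hi1 hik).trans hil⟩
  have := Finset.card_le_card hsub
  rw [Int.card_Icc] at this
  omega

theorem stmt4_general (n k : ℕ) (O J : Finset (ℤ × ℤ)) (hO : O ⊆ Pfin n)
    (hJ : IsIdeal n J) (hJk : (J ∩ Aset n).card = k) :
    (∀ i : ℤ, 1 ≤ i → i ≤ (k : ℤ) → i ≤ |wOJ n O J i|) ∧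
    (∀ i₁ i₂ : ℤ, 1 ≤ i₁ → i₁ ≤ (k : ℤ) → 1 ≤ i₂ → i₂ ≤ (k : ℤ) →
      wOJ n O J i₁ = wOJ n O J i₂ → i₁ = i₂) ∧
    (∀ l : ℤ, 1 ≤ l → l ≤ (n : ℤ) →
      ((((Finset.Icc (1 : ℤ) (k : ℤ)).filter fun i => |wOJ n O J i| ≤ l).card : ℤ) ≤ l)) := by
  have hle : ∀ i : ℤ, 1 ≤ i → i ≤ (k : ℤ) → i ≤ |wOJ n O J i| := by
    intro i hi1 hik
    lift i to ℕ using (by omega)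
    exact le_abs_wOJ_apply hO hJ (by omega) (hJ.diag_mem_of_le_card hJk hi1 hik)
  exact ⟨hle, fun _ _ _ _ _ _ h => (wOJ n O J).injective h,
    fun _ hl _ => card_filter_abs_le_of_le_abs hle (by omega)⟩

/-- For `J ∈ 𝒥ₖ` and `i ∈ [1,k]`, `|w^{O,J}(i)| ≥ i`; consequently the tuple
`(w^{O,J}(1),…,w^{O,J}(k))` is admissible: pairwise distinct entries, and for every
`l ∈ [1,n]` at most `l` entries have absolute value `≤ l`. -/
theorem stmt4 (n k : ℕ) (O J : Finset (ℤ × ℤ)) (hA : Aset n ⊆ O) (hO : O ⊆ Pfin n)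
    (hJ : IsIdeal n J) (hJk : (J ∩ Aset n).card = k) :
    (∀ i : ℤ, 1 ≤ i → i ≤ (k : ℤ) → i ≤ |wOJ n O J i|) ∧
    (∀ i₁ i₂ : ℤ, 1 ≤ i₁ → i₁ ≤ (k : ℤ) → 1 ≤ i₂ → i₂ ≤ (k : ℤ) →
      wOJ n O J i₁ = wOJ n O J i₂ → i₁ = i₂) ∧
    (∀ l : ℤ, 1 ≤ l → l ≤ (n : ℤ) →
      ((((Finset.Icc (1 : ℤ) (k : ℤ)).filter fun i => |wOJ n O J i| ≤ l).card : ℤ) ≤ l)) :=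
  stmt4_general n k O J hO hJ hJk

end
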